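/- arXiv:2004.02209 — 3 statements merged into one kernel-verified Lean document; each statement's English description precedes it below -/
import Mathlib

section
/- (The more fuel, the bigger the blaze.) Let (S_x, I_x) and (S_y, I_y) be SIR trajectories without intervention, with the same parameters β and γ, defined on [t_x, ∞) and [t_y, ∞) respectively. If I_x(t_x) = I_y(t_y) > 0 and S_x(t_x) ≤ S_y(t_y), then Imax_x(t_x) ≤ Imax_y(t_y), with equality only if S_x(t_x) = S_y(t_y) or S_y(t_y) ≤ Scrit. -/
noncomputable section

/-- SIR parameters: β > γ > 0. -/
structure SIRParams where
  β : ℝ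
  γ : ℝ
  hγ : 0 < γ
  hβγ : γ < β

/-- Basic reproduction number R0 = β/γ. -/
def SIRParams.R0 (p : SIRParams) : ℝ := p.β / p.γ

/-- Critical susceptible fraction Scrit = γ/β = 1/R0. -/
def SIRParams.Scrit (p : SIRParams) : ℝ := p.γ / p.β

/-- An intervention with start time `ti` and duration `τ`: a right-continuous
function `b : ℝ → [0,1]` with finitely many discontinuity points such that
`b t = 1` for all `t ∉ [ti, ti + τ]`. -/
structure Intervention (p : SIRParams) where
  b : ℝ → ℝ
  ti : ℝ
  τ : ℝ
  hτ : 0 < τ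
  mem_Icc : ∀ t, b t ∈ Set.Icc (0 : ℝ) 1
  rightCont : ∀ t, ContinuousWithinAt b (Set.Ici t) t
  finiteDisc : {t : ℝ | ¬ ContinuousAt b t}.Finite
  outside : ∀ t, t ∉ Set.Icc ti (ti + τ) → b t = 1

/-- The null intervention b ≡ 1. -/
def nullB : ℝ → ℝ := fun _ => 1

/-- An SIR trajectory under transmission-reduction function `b` on a set `J ⊆ ℝ`
(an interval unbounded above, encoded as being upward closed): a pair of
continuous functions `S, I : ℝ → ℝ` with `0 < S ≤ 1`, `0 ≤ I`, `S + I ≤ 1` on `J`,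
satisfying the integral form of the SIR equations. -/
structure IsSIRTrajectory (p : SIRParams) (b : ℝ → ℝ) (J : Set ℝ) (S I : ℝ → ℝ) : Prop where
  upClosed : ∀ t ∈ J, ∀ s, t ≤ s → s ∈ J
  contS : ContinuousOn S J
  contI : ContinuousOn I J
  Spos : ∀ t ∈ J, 0 < S t
  Sle_one : ∀ t ∈ J, S t ≤ 1
  Inonneg : ∀ t ∈ J, 0 ≤ I t
  sum_le_one : ∀ t ∈ J, S t + I t ≤ 1
  S_eq : ∀ t0 ∈ J, ∀ t ∈ J, t0 ≤ t →
    S t = S t0 - ∫ s in t0..t, b s * p.β * S s * I s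
  I_eq : ∀ t0 ∈ J, ∀ t ∈ J, t0 ≤ t →
    I t = I t0 + ∫ s in t0..t, (b s * p.β * S s * I s - p.γ * I s)

/-- `ImaxAt J I t = sup_{x ≥ t, x ∈ J} I x`. -/
def ImaxAt (J : Set ℝ) (I : ℝ → ℝ) (t : ℝ) : ℝ := sSup (I '' (J ∩ Set.Ici t))

/-- Reference emerging-epidemic trajectory: an SIR trajectory without
intervention on ℝ with I₁ > 0 everywhere, S₁ → 1 and I₁ → 0 as t → −∞. -/
def IsReference (p : SIRParams) (S1 I1 : ℝ → ℝ) : Prop :=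
  IsSIRTrajectory p nullB Set.univ S1 I1 ∧
  (∀ t, 0 < I1 t) ∧
  Filter.Tendsto S1 Filter.atBot (nhds 1) ∧
  Filter.Tendsto I1 Filter.atBot (nhds 0)

/-- The controlled trajectory of intervention `bi`: the SIR trajectory under
`bi.b` on ℝ coinciding with the reference trajectory `(S1, I1)` on `(−∞, bi.ti]`. -/
def IsControlled (p : SIRParams) (S1 I1 : ℝ → ℝ) (bi : Intervention p)
    (S I : ℝ → ℝ) : Prop :=
  IsSIRTrajectory p bi.b Set.univ S I ∧ ∀ t ≤ bi.ti, S t = S1 t ∧ I t = I1 t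

/-- Global peak prevalence of a controlled trajectory: `Imax = sup_{t ∈ ℝ} I t`. -/
def Imax (I : ℝ → ℝ) : ℝ := sSup (Set.range I)

/-- An intervention `bs` (with controlled trajectory `(Sb, Ib)`) is optimal for
its duration if its peak prevalence is at most that of any intervention of the
same duration (with any start time). -/
def IsOptimal (p : SIRParams) (S1 I1 : ℝ → ℝ) (bs : Intervention p)
    (Sb Ib : ℝ → ℝ) : Prop :=
  IsControlled p S1 I1 bs Sb Ib ∧
  ∀ (b : Intervention p), b.τ = bs.τ →
    ∀ S I : ℝ → ℝ, IsControlled p S1 I1 b S I → Imax Ib ≤ Imax I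

/-- A maintain–suppress intervention with maintenance fraction `f ∈ [0,1]`:
`b t = γ/(β·S t)` on `[ti, ti + f·τ)` and `b t = 0` on `[ti + f·τ, ti + τ]`,
where `S` is the controlled trajectory's susceptible fraction. -/
def IsMaintainSuppress (p : SIRParams) (bi : Intervention p) (f : ℝ)
    (S : ℝ → ℝ) : Prop :=
  f ∈ Set.Icc (0 : ℝ) 1 ∧
  (∀ t ∈ Set.Ico bi.ti (bi.ti + f * bi.τ), bi.b t = p.γ / (p.β * S t)) ∧
  (∀ t ∈ Set.Icc (bi.ti + f * bi.τ) (bi.ti + bi.τ), bi.b t = 0)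

/-- A full suppression intervention: `b t = 0` throughout `[ti, ti + τ]`. -/
def IsFullSuppression (p : SIRParams) (bi : Intervention p) : Prop :=
  ∀ t ∈ Set.Icc bi.ti (bi.ti + bi.τ), bi.b t = 0

/-- A fixed control intervention with strictness `σ ∈ [0,1]`: `b t = σ`
throughout `[ti, ti + τ]`. -/
def IsFixedControl (p : SIRParams) (bi : Intervention p) (σ : ℝ) : Prop :=
  σ ∈ Set.Icc (0 : ℝ) 1 ∧ ∀ t ∈ Set.Icc bi.ti (bi.ti + bi.τ), bi.b t = σ

/-!
Along an SIR trajectory without intervention the quantity `I - (Scrit * log S - S)` is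
conserved, and `S` decreases to below `Scrit` whenever `I > 0`. Since
`φ(s) = Scrit * log s - s` increases up to `Scrit` and decreases after it, the peak of `I`
from time `t0` is `I t0 + φ Scrit - φ (max (S t0) Scrit)`, reached when `S` crosses `Scrit`
(or at `t0` if `S t0 ≤ Scrit`). This expression grows with `S t0`, strictly above `Scrit`.
-/

open Set Real intervalIntegral

def sirPotential (c s : ℝ) : ℝ := c * log s - s

section Potential

variable {c s s₀ : ℝ}

theorem hasDerivAt_sirPotential (c : ℝ) (hs : s ≠ 0) :
    HasDerivAt (sirPotential c) (c / s - 1) s := by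
  rw [div_eq_mul_inv]
  exact ((hasDerivAt_log hs).const_mul c).sub (hasDerivAt_id s)

theorem continuousOn_sirPotential (c : ℝ) : ContinuousOn (sirPotential c) (Ioi 0) :=
  fun _ hs => (hasDerivAt_sirPotential c (ne_of_gt hs)).continuousAt.continuousWithinAt

theorem strictMonoOn_sirPotential (c : ℝ) : StrictMonoOn (sirPotential c) (Ioc 0 c) := by
  refine strictMonoOn_of_hasDerivWithinAt_pos (convex_Ioc 0 c)
    ((continuousOn_sirPotential c).mono Ioc_subset_Ioi_self)
    (fun s hs => (hasDerivAt_sirPotential c (ne_of_gt ?_)).hasDerivWithinAt) fun s hs => ?_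
  · rw [interior_Ioc] at hs; exact hs.1
  · rw [interior_Ioc] at hs
    rw [sub_pos, one_lt_div hs.1]
    exact hs.2

theorem strictAntiOn_sirPotential (hc : 0 < c) : StrictAntiOn (sirPotential c) (Ici c) := by
  refine strictAntiOn_of_hasDerivWithinAt_neg (convex_Ici c)
    ((continuousOn_sirPotential c).mono fun s hs => hc.trans_le hs)
    (fun s hs => (hasDerivAt_sirPotential c (ne_of_gt ?_)).hasDerivWithinAt) fun s hs => ?_
  · rw [interior_Ici] at hs; exact hc.trans hs
  · rw [interior_Ici] at hs
    rw [sub_neg, div_lt_one (hc.trans hs)]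
    exact hs

theorem sirPotential_le_self (hc : 0 < c) (hs : 0 < s) : sirPotential c s ≤ sirPotential c c := by
  rcases le_total s c with hsc | hcs
  · exact (strictMonoOn_sirPotential c).monotoneOn ⟨hs, hsc⟩ ⟨hc, le_rfl⟩ hsc
  · exact (strictAntiOn_sirPotential hc).antitoneOn self_mem_Ici hcs hcs

theorem sirPotential_sub_le (hc : 0 < c) (hs : 0 < s) (hss₀ : s ≤ s₀) :
    sirPotential c s - sirPotential c s₀ ≤ sirPotential c c - sirPotential c (max s₀ c) := by
  rcases le_total s₀ c with hs₀c | hcs₀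
  · rw [max_eq_right hs₀c, sub_self, sub_nonpos]
    exact (strictMonoOn_sirPotential c).monotoneOn ⟨hs, hss₀.trans hs₀c⟩
      ⟨hs.trans_le hss₀, hs₀c⟩ hss₀
  · rw [max_eq_left hcs₀]
    linarith [sirPotential_le_self hc hs]

theorem sirPotential_max_le (hc : 0 < c) {sx sy : ℝ} (hle : sx ≤ sy) :
    sirPotential c (max sy c) ≤ sirPotential c (max sx c) :=
  (strictAntiOn_sirPotential hc).antitoneOn (le_max_right _ c) (le_max_right _ c)
    (max_le_max_right c hle)

theorem sirPotential_max_lt (hc : 0 < c) {sx sy : ℝ} (hlt : sx < sy) (hcy : c < sy) :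
    sirPotential c (max sy c) < sirPotential c (max sx c) := by
  refine (strictAntiOn_sirPotential hc) (le_max_right _ c) (le_max_right _ c) ?_
  rw [max_eq_left hcy.le]
  exact max_lt hlt hcy

end Potential

theorem hasDerivWithinAt_Ici_of_eq_add_integral {F f : ℝ → ℝ} {u : ℝ}
    (hf : ContinuousOn f (Ici u)) (hF : ∀ t, u ≤ t → F t = F u + ∫ s in u..t, f s) :
    HasDerivWithinAt F (f u) (Ici u) u := by
  have hint : HasDerivWithinAt (fun t => ∫ s in u..t, f s) (f u) (Ici u) u :=
    integral_hasDerivWithinAt_right (t := Ioi u) IntervalIntegrable.refl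
      ((hf.mono Ioi_subset_Ici_self).stronglyMeasurableAtFilter_nhdsWithin measurableSet_Ioi u)
      ((hf u self_mem_Ici).mono Ioi_subset_Ici_self)
  exact (hint.const_add (F u)).congr_of_mem (fun t ht => hF t ht) self_mem_Ici

theorem SIRParams.β_pos (p : SIRParams) : 0 < p.β := p.hγ.trans p.hβγ

theorem SIRParams.Scrit_pos (p : SIRParams) : 0 < p.Scrit := div_pos p.hγ p.β_pos

theorem SIRParams.Scrit_mul_β (p : SIRParams) : p.Scrit * p.β = p.γ :=
  div_mul_cancel₀ _ p.β_pos.ne'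

namespace IsSIRTrajectory

variable {p : SIRParams}

theorem antitoneOn_S {b : ℝ → ℝ} {J : Set ℝ} {S I : ℝ → ℝ}
    (h : IsSIRTrajectory p b J S I) (hb : ∀ t, 0 ≤ b t) : AntitoneOn S J := by
  intro u hu t ht hut
  rw [h.S_eq u hu t ht hut, sub_le_self_iff]
  refine integral_nonneg hut fun s hs => ?_
  have hsJ := h.upClosed u hu s hs.1
  exact mul_nonneg (mul_nonneg (mul_nonneg (hb s) p.β_pos.le) (h.Spos s hsJ).le)
    (h.Inonneg s hsJ)

variable {t0 : ℝ} {S I : ℝ → ℝ} (h : IsSIRTrajectory p nullB (Ici t0) S I)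
include h

theorem hasDerivWithinAt_S {u : ℝ} (hu : t0 ≤ u) :
    HasDerivWithinAt S (-(p.β * S u * I u)) (Ici u) u := by
  have hsub : Ici u ⊆ Ici t0 := Ici_subset_Ici.mpr hu
  refine hasDerivWithinAt_Ici_of_eq_add_integral (f := fun s => -(p.β * S s * I s))
    (((continuousOn_const.mul h.contS).mul h.contI).neg.mono hsub) fun t hut => ?_
  rw [h.S_eq u hu t (hu.trans hut) hut, integral_neg, ← sub_eq_add_neg]
  simp only [nullB, one_mul]

theorem hasDerivWithinAt_I {u : ℝ} (hu : t0 ≤ u) :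
    HasDerivWithinAt I (p.β * S u * I u - p.γ * I u) (Ici u) u := by
  have hsub : Ici u ⊆ Ici t0 := Ici_subset_Ici.mpr hu
  refine hasDerivWithinAt_Ici_of_eq_add_integral (f := fun s => p.β * S s * I s - p.γ * I s)
    ((((continuousOn_const.mul h.contS).mul h.contI).sub
      (continuousOn_const.mul h.contI)).mono hsub) fun t hut => ?_
  rw [h.I_eq u hu t (hu.trans hut) hut]
  simp only [nullB, one_mul]

theorem I_sub_sirPotential_eq {t : ℝ} (ht : t0 ≤ t) :
    I t - sirPotential p.Scrit (S t) = I t0 - sirPotential p.Scrit (S t0) := by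
  set W : ℝ → ℝ := fun t => I t - sirPotential p.Scrit (S t)
  have hsub : Icc t0 t ⊆ Ici t0 := Icc_subset_Ici_self
  have hWcont : ContinuousOn W (Icc t0 t) :=
    (h.contI.mono hsub).sub ((continuousOn_sirPotential p.Scrit).comp (h.contS.mono hsub)
      fun s hs => h.Spos s (hsub hs))
  have hWderiv : ∀ u ∈ Ico t0 t, HasDerivWithinAt W 0 (Ici u) u := by
    intro u hu
    have hSu := (h.Spos u hu.1).ne'
    refine ((h.hasDerivWithinAt_I hu.1).sub
      ((hasDerivAt_sirPotential p.Scrit hSu).comp_hasDerivWithinAt u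
        (h.hasDerivWithinAt_S hu.1))).congr_deriv ?_
    field_simp
    linear_combination (I u) * p.Scrit_mul_β
  exact constant_of_has_deriv_right_zero hWcont hWderiv t ⟨ht, le_rfl⟩

theorem exists_S_le_Scrit (hI : 0 < I t0) : ∃ t, t0 ≤ t ∧ S t ≤ p.Scrit := by
  by_contra! hS
  have hS0 := h.Spos t0 self_mem_Ici
  -- While `S > Scrit`, conservation forces `I ≥ I t0`, so `S` falls at rate at least `K`.
  have hI_ge : ∀ t, t0 ≤ t → I t0 ≤ I t := fun t ht => by
    have := (strictAntiOn_sirPotential p.Scrit_pos).antitoneOn (hS t ht).le (hS t0 le_rfl).le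
      (h.antitoneOn_S (fun _ => zero_le_one) self_mem_Ici ht ht)
    linarith [h.I_sub_sirPotential_eq ht]
  set K := p.β * p.Scrit * I t0
  have hK : 0 < K := by have := p.β_pos; have := p.Scrit_pos; positivity
  set T := t0 + S t0 / K
  have hT : t0 ≤ T := le_add_of_nonneg_right (div_nonneg hS0.le hK.le)
  have hsub : Icc t0 T ⊆ Ici t0 := Icc_subset_Ici_self
  have hbound : (T - t0) • K ≤ ∫ s in t0..T, p.β * S s * I s := by
    rw [← integral_const]
    refine integral_mono_on hT intervalIntegrable_const
      (((continuousOn_const.mul (h.contS.mono hsub)).mul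
        (h.contI.mono hsub)).intervalIntegrable_of_Icc hT) fun s hs =>
      mul_le_mul (mul_le_mul_of_nonneg_left (hS s hs.1).le p.β_pos.le) (hI_ge s hs.1) hI.le
        (mul_pos p.β_pos (h.Spos s hs.1)).le
  have hST := h.S_eq t0 self_mem_Ici T hT hT
  simp only [nullB, one_mul] at hST
  have hTK : (T - t0) • K = S t0 := by simp only [T, smul_eq_mul]; field_simp; ring
  linarith [h.Spos T hT]

theorem imaxAt_eq (hI : 0 < I t0) :
    ImaxAt (Ici t0) I t0 =
      I t0 + sirPotential p.Scrit p.Scrit - sirPotential p.Scrit (max (S t0) p.Scrit) := by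
  refine IsGreatest.csSup_eq ⟨?_, ?_⟩
  · rcases le_total (S t0) p.Scrit with hsubcrit | hsupcrit
    · exact ⟨t0, ⟨self_mem_Ici, self_mem_Ici⟩, by rw [max_eq_right hsubcrit]; ring⟩
    · obtain ⟨t₂, ht₂, hSt₂⟩ := h.exists_S_le_Scrit hI
      obtain ⟨t₁, ht₁, hSt₁⟩ :=
        intermediate_value_Icc' ht₂ (h.contS.mono Icc_subset_Ici_self) ⟨hSt₂, hsupcrit⟩
      refine ⟨t₁, ⟨ht₁.1, ht₁.1⟩, ?_⟩
      have hconserved := h.I_sub_sirPotential_eq ht₁.1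
      rw [hSt₁] at hconserved
      rw [max_eq_left hsupcrit]
      linarith
  · rintro _ ⟨t, ⟨ht, -⟩, rfl⟩
    have := sirPotential_sub_le p.Scrit_pos (h.Spos t ht)
      (h.antitoneOn_S (fun _ => zero_le_one) self_mem_Ici ht ht)
    linarith [h.I_sub_sirPotential_eq ht]

end IsSIRTrajectory

/-- The more fuel, the bigger the blaze: starting from equal
infectious fractions, a larger susceptible fraction yields a larger peak. -/
theorem more_fuel_bigger_blaze (p : SIRParams) (tx ty : ℝ)
    (Sx Ix Sy Iy : ℝ → ℝ)
    (hx : IsSIRTrajectory p nullB (Set.Ici tx) Sx Ix)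
    (hy : IsSIRTrajectory p nullB (Set.Ici ty) Sy Iy)
    (hIeq : Ix tx = Iy ty) (hIpos : 0 < Iy ty) (hSle : Sx tx ≤ Sy ty) :
    ImaxAt (Set.Ici tx) Ix tx ≤ ImaxAt (Set.Ici ty) Iy ty ∧
    (ImaxAt (Set.Ici tx) Ix tx = ImaxAt (Set.Ici ty) Iy ty →
      Sx tx = Sy ty ∨ Sy ty ≤ p.Scrit) := by
  rw [hx.imaxAt_eq (hIeq ▸ hIpos), hy.imaxAt_eq hIpos, hIeq]
  refine ⟨by linarith [sirPotential_max_le p.Scrit_pos hSle], fun hpeak => ?_⟩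
  by_contra! hne
  linarith [sirPotential_max_lt p.Scrit_pos (hSle.lt_of_ne hne.1) hne.2]
end
end

section
/- (State at the end of a maintain–suppress intervention.) Let b be a maintain–suppress intervention with start time t_i, duration τ, and maintenance fraction f ∈ [0,1], with controlled trajectory (S_b, I_b). Then: (i) I_b(t) = I_b(t_i) and S_b(t) = S_b(t_i) − γ·I_b(t_i)·(t − t_i) for all t ∈ [t_i, t_i + fτ]; (ii) S_b(t_i + τ) = S_b(t_i) − γ·τ·f·I_b(t_i); and (iii) I_b(t_i + τ) = I_b(t_i)·exp(−γ·τ·(1 − f)). -/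
noncomputable section

/-! During maintenance `b·β·S = γ`, so the integrand of the `I`-equation vanishes: `I` stays at
`I(tᵢ)` and `S` decreases at the constant rate `γ·I(tᵢ)`. During suppression `b = 0`, so `S` is
frozen while `I' = -γ I`, and `I` loses the factor `exp (-γ (1 - f) τ)`. -/

open Set Real

theorem ContinuousOn.eq_mul_exp_of_eq_sub_integral {u : ℝ → ℝ} {a b c : ℝ} (hab : a ≤ b)
    (hu : ContinuousOn u (Icc a b))
    (h : ∀ x ∈ Icc a b, u x = u a - c * ∫ s in a..x, u s) :
    u b = u a * exp (-c * (b - a)) := by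
  have hderiv : ∀ x ∈ Ioo a b, HasDerivAt u (-c * u x) x := by
    intro x hx
    have hFTC : HasDerivAt (fun y => u a - c * ∫ s in a..y, u s) (-c * u x) x := by
      have hint := intervalIntegral.integral_hasDerivAt_right
        (hu.mono (uIcc_subset_Icc (left_mem_Icc.2 hab) (Ioo_subset_Icc_self hx))).intervalIntegrable
        (hu.mono Ioo_subset_Icc_self |>.stronglyMeasurableAtFilter isOpen_Ioo x hx)
        ((hu.mono Ioo_subset_Icc_self).continuousAt (isOpen_Ioo.mem_nhds hx))
      simpa using (hint.const_mul c).const_sub (u a)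
    refine hFTC.congr_of_eventuallyEq ?_
    filter_upwards [isOpen_Ioo.mem_nhds hx] with y hy using h y (Ioo_subset_Icc_self hy)
  have hzero : ∀ x ∈ Ioo a b, HasDerivAt (fun y => u y * exp (c * y)) 0 x := fun x hx =>
    ((hderiv x hx).mul ((hasDerivAt_id x).const_mul c).exp).congr_deriv
      (by simp only [id, mul_one]; ring)
  have hconst : u b * exp (c * b) = u a * exp (c * a) := by
    rcases hab.eq_or_lt with rfl | hlt
    · rfl
    obtain ⟨x, -, hslope⟩ := exists_hasDerivAt_eq_slope _ _ hlt (hu.mul (by fun_prop)) hzero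
    rw [eq_comm, div_eq_zero_iff, sub_eq_zero] at hslope
    exact hslope.resolve_right (sub_ne_zero.2 hlt.ne')
  calc u b = u b * exp (c * b) * exp (-(c * b)) := by rw [mul_assoc, ← exp_add]; simp
    _ = u a * exp (-c * (b - a)) := by rw [hconst, mul_assoc, ← exp_add]; ring_nf

namespace IsSIRTrajectory

variable {p : SIRParams} {b : ℝ → ℝ} {J : Set ℝ} {S I : ℝ → ℝ} {t₀ t : ℝ}

theorem Icc_subset (h : IsSIRTrajectory p b J S I) (ht₀ : t₀ ∈ J) : Icc t₀ t ⊆ J :=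
  fun s hs => h.upClosed t₀ ht₀ s hs.1

theorem I_eq_of_maintained (h : IsSIRTrajectory p b J S I) (ht₀ : t₀ ∈ J) (hle : t₀ ≤ t)
    (hb : ∀ s ∈ Ico t₀ t, b s = p.γ / (p.β * S s)) : I t = I t₀ := by
  have hβ : p.β ≠ 0 := (p.hγ.trans p.hβγ).ne'
  have hzero : ∫ s in t₀..t, (b s * p.β * S s * I s - p.γ * I s) = ∫ _ in t₀..t, (0 : ℝ) :=
    intervalIntegral.integral_congr_Ioo_of_le hle fun s hs => by
      have hS : S s ≠ 0 := (h.Spos s (h.Icc_subset ht₀ (Ioo_subset_Icc_self hs))).ne'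
      rw [hb s (Ioo_subset_Ico_self hs)]
      field_simp
      ring
  rw [h.I_eq t₀ ht₀ t (h.upClosed t₀ ht₀ t hle) hle, hzero, intervalIntegral.integral_zero, add_zero]

theorem S_eq_of_maintained (h : IsSIRTrajectory p b J S I) (ht₀ : t₀ ∈ J) (hle : t₀ ≤ t)
    (hb : ∀ s ∈ Ico t₀ t, b s = p.γ / (p.β * S s)) : S t = S t₀ - p.γ * I t₀ * (t - t₀) := by
  have hβ : p.β ≠ 0 := (p.hγ.trans p.hβγ).ne'
  have hinc : ∫ s in t₀..t, b s * p.β * S s * I s = ∫ _ in t₀..t, p.γ * I t₀ :=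
    intervalIntegral.integral_congr_Ioo_of_le hle fun s hs => by
      have hS : S s ≠ 0 := (h.Spos s (h.Icc_subset ht₀ (Ioo_subset_Icc_self hs))).ne'
      rw [hb s (Ioo_subset_Ico_self hs), h.I_eq_of_maintained ht₀ hs.1.le
        fun r hr => hb r ⟨hr.1, hr.2.trans hs.2⟩]
      field_simp
  rw [h.S_eq t₀ ht₀ t (h.upClosed t₀ ht₀ t hle) hle, hinc, intervalIntegral.integral_const,
    smul_eq_mul]
  ring

theorem S_eq_of_suppressed (h : IsSIRTrajectory p b J S I) (ht₀ : t₀ ∈ J) (hle : t₀ ≤ t)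
    (hb : ∀ s ∈ Ico t₀ t, b s = 0) : S t = S t₀ := by
  have hzero : ∫ s in t₀..t, b s * p.β * S s * I s = ∫ _ in t₀..t, (0 : ℝ) :=
    intervalIntegral.integral_congr_Ioo_of_le hle fun s hs => by
      simp only [hb s (Ioo_subset_Ico_self hs), zero_mul]
  rw [h.S_eq t₀ ht₀ t (h.upClosed t₀ ht₀ t hle) hle, hzero, intervalIntegral.integral_zero, sub_zero]

theorem I_eq_of_suppressed (h : IsSIRTrajectory p b J S I) (ht₀ : t₀ ∈ J) (hle : t₀ ≤ t)
    (hb : ∀ s ∈ Ico t₀ t, b s = 0) : I t = I t₀ * exp (-p.γ * (t - t₀)) := by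
  refine (h.contI.mono (h.Icc_subset ht₀)).eq_mul_exp_of_eq_sub_integral hle fun x hx => ?_
  have hdecay : ∫ s in t₀..x, (b s * p.β * S s * I s - p.γ * I s) = ∫ s in t₀..x, -p.γ * I s :=
    intervalIntegral.integral_congr_Ioo_of_le hx.1 fun s hs => by
      simp only [hb s ⟨hs.1.le, hs.2.trans_le hx.2⟩, zero_mul, zero_sub, neg_mul]
  rw [h.I_eq t₀ ht₀ x (h.upClosed t₀ ht₀ x hx.1) hx.1, hdecay, intervalIntegral.integral_const_mul]
  ring

end IsSIRTrajectory

theorem maintain_suppress_endpoint_general (p : SIRParams) (S1 I1 : ℝ → ℝ)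
    (bi : Intervention p) (f : ℝ) (Sb Ib : ℝ → ℝ)
    (hc : IsControlled p S1 I1 bi Sb Ib)
    (hms : IsMaintainSuppress p bi f Sb) :
    (∀ t ∈ Set.Icc bi.ti (bi.ti + f * bi.τ),
      Ib t = Ib bi.ti ∧ Sb t = Sb bi.ti - p.γ * Ib bi.ti * (t - bi.ti)) ∧
    Sb (bi.ti + bi.τ) = Sb bi.ti - p.γ * bi.τ * f * Ib bi.ti ∧
    Ib (bi.ti + bi.τ) = Ib bi.ti * Real.exp (-p.γ * bi.τ * (1 - f)) := by
  obtain ⟨h, -⟩ := hc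
  obtain ⟨⟨hf₀, hf₁⟩, hmaint, hsupp⟩ := hms
  have hswitch : bi.ti ≤ bi.ti + f * bi.τ := le_add_of_nonneg_right (mul_nonneg hf₀ bi.hτ.le)
  have hend : bi.ti + f * bi.τ ≤ bi.ti + bi.τ := by nlinarith [bi.hτ]
  have hmaintained : ∀ t ∈ Icc bi.ti (bi.ti + f * bi.τ),
      Ib t = Ib bi.ti ∧ Sb t = Sb bi.ti - p.γ * Ib bi.ti * (t - bi.ti) := fun t ht =>
    have hb := fun s (hs : s ∈ Ico bi.ti t) => hmaint s ⟨hs.1, hs.2.trans_le ht.2⟩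
    ⟨h.I_eq_of_maintained trivial ht.1 hb, h.S_eq_of_maintained trivial ht.1 hb⟩
  have hsuppressed : ∀ s ∈ Ico (bi.ti + f * bi.τ) (bi.ti + bi.τ), bi.b s = 0 :=
    fun s hs => hsupp s (Ico_subset_Icc_self hs)
  obtain ⟨hI, hS⟩ := hmaintained _ ⟨hswitch, le_rfl⟩
  refine ⟨hmaintained, ?_, ?_⟩
  · rw [h.S_eq_of_suppressed trivial hend hsuppressed, hS]
    ring
  · rw [h.I_eq_of_suppressed trivial hend hsuppressed, hI]
    congr 2
    ring

/-- State at the end of a maintain–suppress intervention. -/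
theorem maintain_suppress_endpoint (p : SIRParams) (S1 I1 : ℝ → ℝ)
    (href : IsReference p S1 I1)
    (bi : Intervention p) (f : ℝ) (Sb Ib : ℝ → ℝ)
    (hc : IsControlled p S1 I1 bi Sb Ib)
    (hms : IsMaintainSuppress p bi f Sb) :
    (∀ t ∈ Set.Icc bi.ti (bi.ti + f * bi.τ),
      Ib t = Ib bi.ti ∧ Sb t = Sb bi.ti - p.γ * Ib bi.ti * (t - bi.ti)) ∧
    Sb (bi.ti + bi.τ) = Sb bi.ti - p.γ * bi.τ * f * Ib bi.ti ∧
    Ib (bi.ti + bi.τ) = Ib bi.ti * Real.exp (-p.γ * bi.τ * (1 - f)) :=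
  maintain_suppress_endpoint_general p S1 I1 bi f Sb Ib hc hms
end
end

section
/- (Don't be late.) Let b* be an optimal intervention of duration τ with start time t_i. Then the global peak of the controlled trajectory cannot occur strictly before the intervention begins: I_{b*}(t) < Imax(b*) for all t < t_i. Consequently, S_{b*}(t_i) > Scrit. -/
noncomputable section

/-!
Along uncontrolled SIR trajectories `I + potential S`, with `potential s = s - Scrit * log s`, is
conserved, so the reference epidemic satisfies `I1 = 1 - potential S1`. Since `S1` decreases
through `Scrit`, `I1` increases up to the time `tp` where `S1 tp = Scrit` and reaches there the
value `peak = 1 - potential Scrit`.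

Full suppression for time `τ` starting shortly before `tp` freezes `S` while `I` decays, which
lowers the conserved quantity to some `c < 1`; afterwards
`I = c - potential S ≤ c - potential Scrit < peak`. (The uncontrolled flow after the
intervention exists for all times: invert the time map `σ ↦ ∫ du / (β u (c - potential u))`
along the orbit, which diverges at the lower root of `potential = c`.) So an optimal
intervention peaks strictly below `peak`, hence starts before `tp`: before its start `I = I1` is
increasing, and `S(ti) = S1(ti) > S1(tp) = Scrit`.
-/

open Set Filter MeasureTheory Topology

namespace SIRParams

variable (p : SIRParams)

lemma β_pos_s9 : 0 < p.β := p.hγ.trans p.hβγ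

lemma Scrit_pos_s9 : 0 < p.Scrit := div_pos p.hγ p.β_pos_s9

lemma Scrit_lt_one : p.Scrit < 1 := (div_lt_one p.β_pos_s9).2 p.hβγ

lemma Scrit_mul_β_s9 : p.Scrit * p.β = p.γ := div_mul_cancel₀ _ p.β_pos_s9.ne'

/-- Along an uncontrolled trajectory `I + potential S` is conserved. -/
def potential (s : ℝ) : ℝ := s - p.Scrit * Real.log s

/-- `I1 = 1 - potential S1` is maximal where `S1 = Scrit`. -/
def peak : ℝ := 1 - p.potential p.Scrit

variable {p}

lemma hasDerivAt_potential {s : ℝ} (hs : s ≠ 0) :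
    HasDerivAt p.potential (1 - p.Scrit / s) s := by
  rw [div_eq_mul_inv]
  exact (hasDerivAt_id' s).fun_sub ((Real.hasDerivAt_log hs).const_mul p.Scrit)

lemma continuousOn_potential : ContinuousOn p.potential (Ioi 0) :=
  fun _ hs => (hasDerivAt_potential (ne_of_gt hs)).continuousAt.continuousWithinAt

lemma potential_strictAntiOn : StrictAntiOn p.potential (Ioc 0 p.Scrit) := by
  refine strictAntiOn_of_deriv_neg (convex_Ioc _ _)
    (continuousOn_potential.mono Ioc_subset_Ioi_self) fun s hs => ?_
  rw [interior_Ioc] at hs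
  rw [(hasDerivAt_potential hs.1.ne').deriv, sub_neg, one_lt_div hs.1]
  exact hs.2

lemma potential_strictMonoOn : StrictMonoOn p.potential (Ici p.Scrit) := by
  refine strictMonoOn_of_deriv_pos (convex_Ici _)
    (continuousOn_potential.mono fun s hs => p.Scrit_pos_s9.trans_le hs) fun s hs => ?_
  rw [interior_Ici] at hs
  have hs0 : 0 < s := p.Scrit_pos_s9.trans hs
  rw [(hasDerivAt_potential hs0.ne').deriv, sub_pos, div_lt_one hs0]
  exact hs

lemma potential_Scrit_le {s : ℝ} (hs : 0 < s) : p.potential p.Scrit ≤ p.potential s := by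
  rcases le_total s p.Scrit with h | h
  · exact potential_strictAntiOn.antitoneOn ⟨hs, h⟩ ⟨p.Scrit_pos_s9, le_rfl⟩ h
  · exact potential_strictMonoOn.monotoneOn self_mem_Ici h h

/-- The tangent-line bound coming from `log x ≤ x - 1`. -/
lemma potential_sub_potential_le {a s : ℝ} (ha : 0 < a) (hs : 0 < s) :
    p.potential a - p.potential s ≤ (p.Scrit / a - 1) * (s - a) := by
  have hlog := Real.log_le_sub_one_of_pos (div_pos hs ha)
  rw [Real.log_div hs.ne' ha.ne'] at hlog
  have key : p.Scrit * (Real.log s - Real.log a) ≤ p.Scrit * (s / a - 1) :=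
    mul_le_mul_of_nonneg_left hlog p.Scrit_pos_s9.le
  have : p.Scrit * (s / a - 1) = p.Scrit / a * (s - a) := by field_simp
  simp only [potential]
  linarith

lemma sub_Scrit_div_mul {s : ℝ} (hs : s ≠ 0) (i : ℝ) :
    (1 - p.Scrit / s) * (p.β * s * i) = p.β * s * i - p.γ * i := by
  rw [← p.Scrit_mul_β_s9]; field_simp

end SIRParams

lemma hasDerivAt_of_eq_add_integral {F f : ℝ → ℝ} (hf : Continuous f)
    (hF : ∀ u v, u ≤ v → F v = F u + ∫ s in u..v, f s) (t : ℝ) : HasDerivAt F (f t) t := by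
  refine ((hf.integral_hasStrictDerivAt (t - 1) t).hasDerivAt.const_add
    (F (t - 1))).congr_of_eventuallyEq ?_
  filter_upwards [Ioi_mem_nhds (sub_one_lt t)] with u hu using hF _ _ hu.le

lemma eq_add_integral_of_hasDerivWithinAt {F f : ℝ → ℝ} (hF : Continuous F)
    (hf : ∀ u v, IntervalIntegrable f volume u v)
    (hF' : ∀ t, HasDerivWithinAt F (f t) (Ioi t) t) (u v : ℝ) (huv : u ≤ v) :
    F v = F u + ∫ s in u..v, f s := by
  rw [intervalIntegral.integral_eq_sub_of_hasDeriv_right_of_le huv hF.continuousOn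
    (fun t _ => hF' t) (hf u v)]
  ring

lemma hasDerivWithinAt_Ioi_ite_le {f g : ℝ → ℝ} {T x f' : ℝ} (hfg : f T = g T)
    (hf : x < T → HasDerivWithinAt f f' (Ioi x) x) (hg : T ≤ x → HasDerivWithinAt g f' (Ioi x) x) :
    HasDerivWithinAt (fun t => if t ≤ T then f t else g t) f' (Ioi x) x := by
  rcases lt_or_ge x T with hx | hx
  · refine (hf hx).congr_of_eventuallyEq ?_ (if_pos hx.le)
    filter_upwards [mem_nhdsWithin_of_mem_nhds (Iic_mem_nhds hx)] with t ht using if_pos ht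
  · refine (hg hx).congr_of_eventuallyEq ?_ ?_
    · filter_upwards [self_mem_nhdsWithin] with t (ht : x < t) using if_neg (hx.trans_lt ht).not_ge
    · split_ifs with h
      exacts [le_antisymm h hx ▸ hfg, rfl]

namespace IsSIRTrajectory

variable {p : SIRParams} {b S I : ℝ → ℝ}

lemma continuous_S (h : IsSIRTrajectory p b univ S I) : Continuous S :=
  continuousOn_univ.mp h.contS

lemma continuous_I (h : IsSIRTrajectory p b univ S I) : Continuous I :=
  continuousOn_univ.mp h.contI

lemma le_Imax (h : IsSIRTrajectory p b univ S I) (t : ℝ) : I t ≤ Imax I := by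
  refine le_csSup ⟨1, ?_⟩ (mem_range_self t)
  rintro _ ⟨s, rfl⟩
  linarith [h.sum_le_one s (mem_univ s), h.Spos s (mem_univ s)]

lemma hasDerivAt (h : IsSIRTrajectory p b univ S I) (hb : Continuous b) (t : ℝ) :
    HasDerivAt S (-(b t * p.β * S t * I t)) t ∧
      HasDerivAt I (b t * p.β * S t * I t - p.γ * I t) t := by
  have hinf : Continuous fun s => b s * p.β * S s * I s :=
    ((hb.mul continuous_const).mul h.continuous_S).mul h.continuous_I
  refine ⟨hasDerivAt_of_eq_add_integral (f := fun s => -(b s * p.β * S s * I s)) hinf.neg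
    (fun u v huv => ?_) t, hasDerivAt_of_eq_add_integral
      (hinf.sub (continuous_const.mul h.continuous_I))
      (fun u v huv => h.I_eq u (mem_univ u) v (mem_univ v) huv) t⟩
  rw [intervalIntegral.integral_neg, ← sub_eq_add_neg]
  exact h.S_eq u (mem_univ u) v (mem_univ v) huv

lemma of_hasDerivWithinAt (hb : ∀ u v, IntervalIntegrable b volume u v)
    (hS : Continuous S) (hI : Continuous I) (hSpos : ∀ t, 0 < S t) (hInonneg : ∀ t, 0 ≤ I t)
    (hsum : ∀ t, S t + I t ≤ 1)
    (hS' : ∀ t, HasDerivWithinAt S (-(b t * p.β * S t * I t)) (Ioi t) t)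
    (hI' : ∀ t, HasDerivWithinAt I (b t * p.β * S t * I t - p.γ * I t) (Ioi t) t) :
    IsSIRTrajectory p b univ S I := by
  have hinf : ∀ u v, IntervalIntegrable (fun s => b s * p.β * S s * I s) volume u v :=
    fun u v => (((hb u v).mul_const p.β).mul_continuousOn hS.continuousOn).mul_continuousOn
      hI.continuousOn
  refine ⟨fun _ _ s _ => mem_univ s, hS.continuousOn, hI.continuousOn, fun t _ => hSpos t,
    fun t _ => by linarith [hsum t, hInonneg t], fun t _ => hInonneg t, fun t _ => hsum t,
    fun u _ v _ huv => ?_, fun u _ v _ huv => eq_add_integral_of_hasDerivWithinAt hI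
      (fun u v => (hinf u v).sub ((continuous_const.mul hI).intervalIntegrable u v)) hI' u v huv⟩
  rw [eq_add_integral_of_hasDerivWithinAt (f := fun s => -(b s * p.β * S s * I s)) hS
    (fun u v => (hinf u v).neg) hS' u v huv,
    intervalIntegral.integral_neg, ← sub_eq_add_neg]

lemma I_add_potential_eq (h : IsSIRTrajectory p nullB univ S I) (s t : ℝ) :
    I s + p.potential (S s) = I t + p.potential (S t) := by
  have hderiv (t : ℝ) : HasDerivAt (fun u => I u + p.potential (S u)) 0 t := by
    obtain ⟨hS, hI⟩ := h.hasDerivAt continuous_const t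
    have hSt := (h.Spos t (mem_univ t)).ne'
    refine (hI.fun_add ((SIRParams.hasDerivAt_potential (p := p) hSt).comp t hS)).congr_deriv ?_
    simp only [nullB, one_mul, mul_neg, p.sub_Scrit_div_mul hSt]
    ring
  exact is_const_of_deriv_eq_zero (fun u => (hderiv u).differentiableAt)
    (fun u => (hderiv u).deriv) s t

end IsSIRTrajectory

namespace IsReference

variable {p : SIRParams} {S1 I1 : ℝ → ℝ}

lemma S_pos (href : IsReference p S1 I1) (t : ℝ) : 0 < S1 t := href.1.Spos t (mem_univ t)

lemma I_pos (href : IsReference p S1 I1) (t : ℝ) : 0 < I1 t := href.2.1 t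

lemma hasDerivAt (href : IsReference p S1 I1) (t : ℝ) :
    HasDerivAt S1 (-(p.β * S1 t * I1 t)) t ∧ HasDerivAt I1 ((p.β * S1 t - p.γ) * I1 t) t := by
  obtain ⟨hS, hI⟩ := href.1.hasDerivAt continuous_const t
  simp only [nullB, one_mul] at hS hI
  exact ⟨hS, hI.congr_deriv (by ring)⟩

lemma I_add_potential (href : IsReference p S1 I1) (t : ℝ) :
    I1 t + p.potential (S1 t) = 1 := by
  obtain ⟨htraj, -, hS, hI⟩ := href
  have hpot : Tendsto (p.potential ∘ S1) atBot (𝓝 (p.potential 1)) :=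
    ((SIRParams.hasDerivAt_potential one_ne_zero).continuousAt.tendsto).comp hS
  have hlim := hI.add hpot
  rw [zero_add, SIRParams.potential, Real.log_one, mul_zero, sub_zero] at hlim
  exact tendsto_nhds_unique (tendsto_const_nhds.congr fun s => htraj.I_add_potential_eq t s) hlim

lemma strictAnti_S (href : IsReference p S1 I1) : StrictAnti S1 :=
  strictAnti_of_deriv_neg fun t => by
    rw [(href.hasDerivAt t).1.deriv, neg_lt_zero]
    exact mul_pos (mul_pos p.β_pos_s9 (href.S_pos t)) (href.I_pos t)

/-- If `S1` stayed above `Scrit`, then `I1` would grow, so `S1` would decrease at least linearly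
and become negative. -/
lemma exists_S_le_Scrit (href : IsReference p S1 I1) : ∃ t, S1 t ≤ p.Scrit := by
  by_contra! hcon
  have hmono : Monotone I1 := monotone_of_deriv_nonneg
    (fun t => (href.hasDerivAt t).2.differentiableAt) fun t => by
      rw [(href.hasDerivAt t).2.deriv]
      refine mul_nonneg ?_ (href.I_pos t).le
      nlinarith [hcon t, p.Scrit_mul_β_s9, p.β_pos_s9]
  set C := p.γ * I1 0
  have hC : 0 < C := mul_pos p.hγ (href.I_pos 0)
  have hrate (t : ℝ) (ht : 0 < t) : deriv S1 t ≤ -C := by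
    rw [(href.hasDerivAt t).1.deriv, neg_le_neg_iff]
    calc C = p.β * p.Scrit * I1 0 := by rw [mul_comm p.β, p.Scrit_mul_β_s9]
      _ ≤ p.β * S1 t * I1 t := by
        have := p.β_pos_s9
        have := href.S_pos t
        have := href.I_pos 0
        gcongr
        exacts [(hcon t).le, hmono ht.le]
  have hT : 0 ≤ S1 0 / C := div_nonneg (href.S_pos 0).le hC.le
  have hslope := (convex_Ici (0 : ℝ)).image_sub_le_mul_sub_of_deriv_le
    href.1.continuous_S.continuousOn
    (fun t _ => (href.hasDerivAt t).1.differentiableAt.differentiableWithinAt)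
    (fun t ht => hrate t (by rwa [interior_Ici] at ht)) 0 self_mem_Ici _ hT hT
  rw [sub_zero, neg_mul, mul_div_cancel₀ _ hC.ne'] at hslope
  linarith [href.S_pos (S1 0 / C)]

lemma exists_S_eq_Scrit (href : IsReference p S1 I1) : ∃ tp, S1 tp = p.Scrit := by
  obtain ⟨t₂, ht₂⟩ := href.exists_S_le_Scrit
  obtain ⟨t₁, ht₁⟩ := (href.2.2.1.eventually (lt_mem_nhds p.Scrit_lt_one)).exists
  have h12 : t₁ ≤ t₂ := href.strictAnti_S.le_iff_ge.mp (ht₂.trans ht₁.le)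
  obtain ⟨tp, -, htp⟩ :=
    intermediate_value_Icc' h12 href.1.continuous_S.continuousOn ⟨ht₂, ht₁.le⟩
  exact ⟨tp, htp⟩

lemma strictMonoOn_I (href : IsReference p S1 I1) {tp : ℝ} (htp : S1 tp = p.Scrit) :
    StrictMonoOn I1 (Iic tp) := by
  refine strictMonoOn_of_deriv_pos (convex_Iic _) href.1.continuous_I.continuousOn fun t ht => ?_
  rw [interior_Iic] at ht
  rw [(href.hasDerivAt t).2.deriv]
  refine mul_pos ?_ (href.I_pos t)
  have := href.strictAnti_S ht
  nlinarith [p.Scrit_mul_β_s9, p.β_pos_s9]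

lemma I_eq_peak (href : IsReference p S1 I1) {tp : ℝ} (htp : S1 tp = p.Scrit) :
    I1 tp = p.peak := by
  have := href.I_add_potential tp
  rw [htp] at this
  rw [SIRParams.peak]
  linarith

end IsReference

section AutonomousODE

/-- The time the flow of `x' = -v x` needs to go from `x₀` down to `σ`. -/
def timeMap (v : ℝ → ℝ) (x₀ σ : ℝ) : ℝ := ∫ u in σ..x₀, (v u)⁻¹

variable {v : ℝ → ℝ} {a b x₀ : ℝ}

lemma tendsto_timeMap_atTop {K : ℝ} (hax : a < x₀)
    (hv : ContinuousOn v (Ioc a x₀)) (hpos : ∀ x ∈ Ioc a x₀, 0 < v x)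
    (hK : ∀ x ∈ Ioc a x₀, v x ≤ K * (x - a)) :
    Tendsto (timeMap v x₀) (𝓝[>] a) atTop := by
  have hK0 : 0 < K := pos_of_mul_pos_left ((hpos x₀ ⟨hax, le_rfl⟩).trans_le
    (hK x₀ ⟨hax, le_rfl⟩)) (sub_pos.2 hax).le
  have hlog : Tendsto (fun σ => K⁻¹ * (Real.log (x₀ - a) - Real.log (σ - a))) (𝓝[>] a) atTop := by
    have hsub : Tendsto (fun σ => σ - a) (𝓝[>] a) (𝓝[>] 0) := by
      refine tendsto_nhdsWithin_of_tendsto_nhds_of_eventually_within _ ?_ ?_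
      · simpa using (tendsto_id (x := 𝓝 a)).sub_const a |>.mono_left nhdsWithin_le_nhds
      · filter_upwards [self_mem_nhdsWithin] with σ (hσ : a < σ) using sub_pos.2 hσ
    exact (tendsto_atTop_add_const_left _ _
      (tendsto_neg_atBot_atTop.comp (Real.tendsto_log_nhdsGT_zero.comp hsub))).const_mul_atTop
        (inv_pos.2 hK0)
  refine tendsto_atTop_mono' _ ?_ hlog
  filter_upwards [Ioo_mem_nhdsGT hax] with σ hσ
  have hσa : 0 < σ - a := sub_pos.2 hσ.1
  have hIcc : Icc σ x₀ ⊆ Ioc a x₀ := fun u hu => ⟨hσ.1.trans_le hu.1, hu.2⟩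
  -- comparison with `∫ du / (K (u - a))`, which diverges logarithmically
  have hint : ∫ u in σ..x₀, (K * (u - a))⁻¹ = K⁻¹ * (Real.log (x₀ - a) - Real.log (σ - a)) := by
    simp only [mul_inv, intervalIntegral.integral_const_mul]
    rw [intervalIntegral.integral_comp_sub_right (fun u => u⁻¹) a,
      integral_inv_of_pos hσa (hσa.trans (sub_lt_sub_right hσ.2 a)),
      Real.log_div (sub_pos.2 hax).ne' hσa.ne']
  rw [← hint]
  refine intervalIntegral.integral_mono_on hσ.2.le ?_ ?_ fun u hu => ?_
  · refine ContinuousOn.intervalIntegrable ?_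
    rw [uIcc_of_le hσ.2.le]
    exact (continuousOn_const.mul (continuousOn_id.sub continuousOn_const)).inv₀
      fun u hu => (mul_pos hK0 (sub_pos.2 (hσ.1.trans_le hu.1))).ne'
  · refine ContinuousOn.intervalIntegrable ?_
    rw [uIcc_of_le hσ.2.le]
    exact (hv.mono hIcc).inv₀ fun u hu => (hpos u (hIcc hu)).ne'
  · exact inv_anti₀ (hpos u (hIcc hu)) (hK u (hIcc hu))

lemma hasDerivAt_timeMap (hv : ContinuousOn v (Ioo a b)) (hpos : ∀ x ∈ Ioo a b, 0 < v x)
    (hx₀ : x₀ ∈ Ioo a b) {σ : ℝ} (hσ : σ ∈ Ioo a b) :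
    HasDerivAt (timeMap v x₀) (-(v σ)⁻¹) σ := by
  have hinv : ContinuousOn (fun u => (v u)⁻¹) (Ioo a b) := hv.inv₀ fun u hu => (hpos u hu).ne'
  exact intervalIntegral.integral_hasDerivAt_left
    (hinv.mono (ordConnected_Ioo.uIcc_subset hσ hx₀)).intervalIntegrable
    (hinv.stronglyMeasurableAtFilter isOpen_Ioo σ hσ) (hinv.continuousAt (isOpen_Ioo.mem_nhds hσ))

lemma strictAntiOn_timeMap (hv : ContinuousOn v (Ioo a b)) (hpos : ∀ x ∈ Ioo a b, 0 < v x)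
    (hx₀ : x₀ ∈ Ioo a b) : StrictAntiOn (timeMap v x₀) (Ioo a b) :=
  strictAntiOn_of_deriv_neg (convex_Ioo a b)
    (fun σ hσ => (hasDerivAt_timeMap hv hpos hx₀ hσ).continuousAt.continuousWithinAt)
    fun σ hσ => by
      rw [interior_Ioo] at hσ
      rw [(hasDerivAt_timeMap hv hpos hx₀ hσ).deriv, neg_lt_zero, inv_pos]
      exact hpos σ hσ

lemma surjOn_timeMap {K m : ℝ} (hax : a < x₀) (hxm : x₀ < m) (hmb : m < b)
    (hv : ContinuousOn v (Ioo a b)) (hpos : ∀ x ∈ Ioo a b, 0 < v x)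
    (hK : ∀ x ∈ Ioc a x₀, v x ≤ K * (x - a)) :
    SurjOn (timeMap v x₀) (Ioo a m) (Ioi (timeMap v x₀ m)) := by
  intro t (ht : timeMap v x₀ m < t)
  obtain ⟨σ₁, hσ₁t, hσ₁⟩ := (((tendsto_timeMap_atTop hax
    (hv.mono fun u hu => ⟨hu.1, hu.2.trans_lt (hxm.trans hmb)⟩)
    (fun u hu => hpos u ⟨hu.1, hu.2.trans_lt (hxm.trans hmb)⟩) hK).eventually_gt_atTop t).and
      (Ioo_mem_nhdsGT hax)).exists
  obtain ⟨σ, hσ, hσt⟩ := intermediate_value_Ioo' (hσ₁.2.trans hxm).le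
    (fun u hu => (hasDerivAt_timeMap hv hpos ⟨hax, hxm.trans hmb⟩
      ⟨hσ₁.1.trans_le hu.1, hu.2.trans_lt hmb⟩).continuousAt.continuousWithinAt) ⟨ht, hσ₁t⟩
  exact ⟨σ, ⟨hσ₁.1.trans hσ.1, hσ.2⟩, hσt⟩

lemma continuousAt_of_antitoneOn_of_image_mem_nhds {f : ℝ → ℝ} {s : Set ℝ} {t : ℝ}
    (hf : AntitoneOn f s) (hs : s ∈ 𝓝 t) (hfs : f '' s ∈ 𝓝 (f t)) : ContinuousAt f t :=
  continuousAt_of_monotoneOn_of_image_mem_nhds (β := ℝᵒᵈ) hf hs hfs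

/-- The solution of `x' = -v x`, `x 0 = x₀`, is the inverse of the time map restricted to `(a, m)`
for some `m ∈ (x₀, b)`. -/
lemma exists_strictAntiOn_solution {K : ℝ} (hax : a < x₀) (hxb : x₀ < b)
    (hv : ContinuousOn v (Ioo a b)) (hpos : ∀ x ∈ Ioo a b, 0 < v x)
    (hK : ∀ x ∈ Ioc a x₀, v x ≤ K * (x - a)) :
    ∃ e < 0, ∃ G : ℝ → ℝ, G 0 = x₀ ∧ StrictAntiOn G (Ioi e) ∧
      ∀ t, e < t → G t ∈ Ioo a b ∧ ContinuousAt G t ∧ HasDerivAt G (-v (G t)) t := by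
  obtain ⟨m, hxm, hmb⟩ := exists_between hxb
  have hsub : Ioo a m ⊆ Ioo a b := Ioo_subset_Ioo_right hmb.le
  have hm : m ∈ Ioo a b := ⟨hax.trans hxm, hmb⟩
  have hF' {σ : ℝ} (hσ : σ ∈ Ioo a b) := hasDerivAt_timeMap hv hpos ⟨hax, hxb⟩ hσ
  have hFanti := strictAntiOn_timeMap hv hpos ⟨hax, hxb⟩
  have hsurj := surjOn_timeMap hax hxm hmb hv hpos hK
  set F := timeMap v x₀
  set G := Function.invFunOn F (Ioo a m)
  have hG (t : ℝ) (ht : F m < t) : G t ∈ Ioo a m ∧ F (G t) = t :=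
    ⟨Function.invFunOn_mem (hsurj ht), Function.invFunOn_eq (hsurj ht)⟩
  have hGF (σ : ℝ) (hσ : σ ∈ Ioo a m) : G (F σ) = σ := by
    have hFσ : F m < F σ := hFanti (hsub hσ) hm hσ.2
    exact hFanti.injOn (hsub (hG _ hFσ).1) (hsub hσ) (hG _ hFσ).2
  have hGanti : StrictAntiOn G (Ioi (F m)) := fun s hs t ht hst => by
    by_contra! hle
    have := hFanti.antitoneOn (hsub (hG s hs).1) (hsub (hG t ht).1) hle
    rw [(hG s hs).2, (hG t ht).2] at this
    linarith
  have hGcont (t : ℝ) (ht : F m < t) : ContinuousAt G t :=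
    continuousAt_of_antitoneOn_of_image_mem_nhds hGanti.antitoneOn (Ioi_mem_nhds ht)
      (mem_of_superset (isOpen_Ioo.mem_nhds (hG t ht).1)
        fun σ hσ => ⟨F σ, hFanti (hsub hσ) hm hσ.2, hGF σ hσ⟩)
  have hGderiv (t : ℝ) (ht : F m < t) : HasDerivAt G (-v (G t)) t := by
    have hGt := hsub (hG t ht).1
    have := (hF' hGt).of_local_left_inverse (hGcont t ht)
      (neg_ne_zero.2 (inv_ne_zero (hpos _ hGt).ne'))
      (eventually_of_mem (Ioi_mem_nhds ht) fun s hs => (hG s hs).2)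
    rwa [inv_neg, inv_inv] at this
  refine ⟨F m, by simpa [F, timeMap] using hFanti ⟨hax, hxb⟩ hm hxm, G, ?_, hGanti,
    fun t ht => ⟨hsub (hG t ht).1, hGcont t ht, hGderiv t ht⟩⟩
  simpa [F, timeMap] using hGF x₀ ⟨hax, hxm⟩

lemma exists_solution_Ici {K : ℝ} (t₀ : ℝ) (hax : a < x₀) (hxb : x₀ < b)
    (hv : ContinuousOn v (Ioo a b)) (hpos : ∀ x ∈ Ioo a b, 0 < v x)
    (hK : ∀ x ∈ Ioc a x₀, v x ≤ K * (x - a)) :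
    ∃ x : ℝ → ℝ, Continuous x ∧ (∀ t ≤ t₀, x t = x₀) ∧ (∀ t, x t ∈ Ioc a x₀) ∧
      ∀ t, t₀ ≤ t → HasDerivWithinAt x (-v (x t)) (Ici t) t := by
  obtain ⟨e, he, G, hG0, hGanti, hG⟩ := exists_strictAntiOn_solution hax hxb hv hpos hK
  have hmax (t : ℝ) : e < max (t - t₀) 0 := he.trans_le (le_max_right _ _)
  refine ⟨fun t => G (max (t - t₀) 0), continuous_iff_continuousAt.2 fun t =>
      (hG _ (hmax t)).2.1.comp (f := fun t => max (t - t₀) 0) (by fun_prop),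
    fun t ht => by simp [ht, hG0], fun t => ⟨?_, ?_⟩,
    fun t ht => ?_⟩
  · exact (hG _ (hmax t)).1.1
  · rw [← hG0]
    exact hGanti.antitoneOn (he : e < 0) (hmax t) (le_max_right _ _)
  · have hd := (hG _ (he.trans_le (sub_nonneg.2 ht))).2.2.comp_sub_const t t₀
    simp only [max_eq_left (sub_nonneg.2 ht)]
    exact hd.hasDerivWithinAt.congr_of_mem
      (fun s (hs : t ≤ s) => by rw [max_eq_left (sub_nonneg.2 (ht.trans hs))]) self_mem_Ici

end AutonomousODE

section Suppression

def suppression (T τ : ℝ) (t : ℝ) : ℝ := if t ∈ Ico T (T + τ) then 0 else 1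

variable {T τ : ℝ}

lemma suppression_eq_zero {t : ℝ} (ht : t ∈ Ico T (T + τ)) : suppression T τ t = 0 := if_pos ht

lemma suppression_eq_one {t : ℝ} (ht : t ∉ Ico T (T + τ)) : suppression T τ t = 1 := if_neg ht

lemma intervalIntegrable_suppression (u v : ℝ) :
    IntervalIntegrable (suppression T τ) volume u v := by
  refine intervalIntegrable_iff.2 (Measure.integrableOn_of_bounded (M := 1) measure_Ioc_lt_top.ne
    (Measurable.aestronglyMeasurable ?_) (ae_of_all _ fun t => ?_))
  · exact Measurable.ite measurableSet_Ico measurable_const measurable_const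
  · unfold suppression; split_ifs <;> simp

lemma continuousWithinAt_Ici_suppression (t : ℝ) :
    ContinuousWithinAt (suppression T τ) (Ici t) t := by
  refine tendsto_nhds_of_eventually_eq ?_
  by_cases ht : t ∈ Ico T (T + τ)
  · filter_upwards [Ico_mem_nhdsGE ht.2] with s hs
    rw [suppression_eq_zero ht, suppression_eq_zero ⟨ht.1.trans hs.1, hs.2⟩]
  rw [suppression_eq_one ht]
  rcases lt_or_ge t T with hT | hT
  · filter_upwards [mem_nhdsWithin_of_mem_nhds (Iio_mem_nhds hT)] with s hs
    exact suppression_eq_one fun h => (not_le.2 hs) h.1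
  · filter_upwards [self_mem_nhdsWithin] with s (hs : t ≤ s)
    exact suppression_eq_one fun h => ht ⟨hT, hs.trans_lt h.2⟩

lemma continuousOn_suppression (hτ : 0 < τ) :
    ContinuousOn (suppression T τ) {T, T + τ}ᶜ := by
  refine ContinuousOn.if' (fun t ht => ?_) (fun t ht => ?_) continuousOn_const continuousOn_const
  all_goals
    rw [ofPred_mem_eq, frontier_Ico (lt_add_of_pos_right T hτ)] at ht
    exact absurd ht.2 ht.1

def suppressionIntervention (p : SIRParams) (T : ℝ) (hτ : 0 < τ) : Intervention p where
  b := suppression T τ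
  ti := T
  τ := τ
  hτ := hτ
  mem_Icc t := by unfold suppression; split_ifs <;> simp
  rightCont := continuousWithinAt_Ici_suppression
  finiteDisc := (toFinite {T, T + τ}).subset fun t ht => by
    by_contra hmem
    exact ht ((continuousOn_suppression hτ).continuousAt
      ((toFinite {T, T + τ}).isClosed.isOpen_compl.mem_nhds hmem))
  outside t ht := suppression_eq_one fun h => ht (Ico_subset_Icc_self h)

end Suppression

/-- With `I = c - potential S` this is an uncontrolled SIR trajectory from time `t₀` on. -/
structure IsOrbitSolution (p : SIRParams) (t₀ S₀ c : ℝ) (S : ℝ → ℝ) : Prop where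
  continuous : Continuous S
  eq_of_le : ∀ t ≤ t₀, S t = S₀
  pos : ∀ t, 0 < S t
  le : ∀ t, S t ≤ S₀
  potential_lt : ∀ t, p.potential (S t) < c
  hasDerivWithinAt : ∀ t, t₀ ≤ t →
    HasDerivWithinAt S (-(p.β * S t * (c - p.potential (S t)))) (Ici t) t

namespace SIRParams

variable {p : SIRParams}

lemma exists_potential_eq {c : ℝ} (hc : p.potential p.Scrit < c) :
    ∃ a ∈ Ioo 0 p.Scrit, p.potential a = c := by
  have hlog : Real.log p.Scrit < 0 := Real.log_neg p.Scrit_pos_s9 p.Scrit_lt_one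
  have hc0 : 0 < c := lt_of_le_of_lt (by simp only [potential]; nlinarith [p.Scrit_pos_s9]) hc
  -- at `s₀` the potential exceeds `c` by exactly `s₀ - Scrit * log Scrit > 0`
  set s₀ := p.Scrit * Real.exp (-c / p.Scrit)
  have hs₀ : 0 < s₀ := mul_pos p.Scrit_pos_s9 (Real.exp_pos _)
  have hs₀lt : s₀ < p.Scrit :=
    mul_lt_of_lt_one_right p.Scrit_pos_s9
      (Real.exp_lt_one_iff.2 (div_neg_of_neg_of_pos (by linarith) p.Scrit_pos_s9))
  have hpot₀ : c < p.potential s₀ := by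
    have : p.potential s₀ = s₀ - p.Scrit * Real.log p.Scrit + c := by
      have := p.Scrit_pos_s9.ne'
      simp only [s₀, potential, Real.log_mul this (Real.exp_pos _).ne', Real.log_exp]
      field_simp
      ring
    nlinarith [p.Scrit_pos_s9]
  obtain ⟨a, ha, hac⟩ := intermediate_value_Ioo' hs₀lt.le
    (continuousOn_potential.mono fun s hs => hs₀.trans_le hs.1) ⟨hc, hpot₀⟩
  exact ⟨a, ⟨hs₀.trans ha.1, ha.2⟩, hac⟩

/-- Above the root `a < Scrit` of `potential = c`, the level set `I = c - potential S` is a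
genuine orbit piece, and the flow `S' = -β S I` along it never reaches `a`. -/
lemma exists_orbit_solution {S₀ c : ℝ} (t₀ : ℝ) (hS₀ : 0 < S₀) (hc : p.potential S₀ < c) :
    ∃ S : ℝ → ℝ, IsOrbitSolution p t₀ S₀ c S := by
  obtain ⟨a, ha, hac⟩ := exists_potential_eq ((potential_Scrit_le hS₀).trans_lt hc)
  have hlt (u : ℝ) (hu : u ∈ Ioc a S₀) : p.potential u < c := by
    rcases le_total u p.Scrit with h | h
    · exact hac ▸ potential_strictAntiOn ⟨ha.1, ha.2.le⟩ ⟨ha.1.trans hu.1, h⟩ hu.1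
    · exact (potential_strictMonoOn.monotoneOn h (h.trans hu.2) hu.2).trans_lt hc
  have haS₀ : a < S₀ := by
    by_contra! h
    exact (potential_strictAntiOn.antitoneOn ⟨hS₀, h.trans ha.2.le⟩ ⟨ha.1, ha.2.le⟩ h).not_gt
      (hac ▸ hc)
  obtain ⟨b, hS₀b, hb⟩ := exists_Ico_subset_of_mem_nhds
    ((hasDerivAt_potential hS₀.ne').continuousAt.eventually (gt_mem_nhds hc)) (exists_gt S₀)
  have hlt' (u : ℝ) (hu : u ∈ Ioo a b) : p.potential u < c := by
    rcases le_total u S₀ with h | h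
    exacts [hlt u ⟨hu.1, h⟩, hb ⟨h, hu.2⟩]
  have hpos (u : ℝ) (hu : u ∈ Ioo a b) : 0 < u := ha.1.trans hu.1
  obtain ⟨S, hS, hSt₀, hSmem, hS'⟩ :=
    exists_solution_Ici (v := fun u => p.β * u * (c - p.potential u))
    (K := p.β * S₀ * (p.Scrit / a - 1)) t₀ haS₀ hS₀b
    (fun u hu => ((continuousAt_const.mul continuousAt_id).mul (continuousAt_const.sub
      (hasDerivAt_potential (hpos u hu).ne').continuousAt)).continuousWithinAt)
    (fun u hu => mul_pos (mul_pos p.β_pos_s9 (hpos u hu)) (sub_pos.2 (hlt' u hu))) fun u hu => by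
      have hsub := hac ▸ potential_sub_potential_le ha.1 (ha.1.trans hu.1)
      have hg := sub_pos.2 (hlt u hu)
      calc p.β * u * (c - p.potential u) ≤ p.β * S₀ * (c - p.potential u) := by
            gcongr
            exacts [p.β_pos_s9.le, hu.2]
        _ ≤ p.β * S₀ * ((p.Scrit / a - 1) * (u - a)) := by
            gcongr; exact (mul_pos p.β_pos_s9 hS₀).le
        _ = _ := by ring
  exact ⟨S, hS, hSt₀, fun t => ha.1.trans (hSmem t).1, fun t => (hSmem t).2,
    fun t => hlt _ (hSmem t), hS'⟩

end SIRParams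

section Competitor

variable {p : SIRParams} {S1 I1 Sf : ℝ → ℝ} {T τ c : ℝ}

/-- The competitor trajectory: the reference one up to `T`, full suppression on `[T, T + τ]` (so
`S` is frozen and `I` decays exponentially), then the uncontrolled flow `Sf` on the orbit
`I = c - potential S`. -/
def suppressedS (S1 Sf : ℝ → ℝ) (T t : ℝ) : ℝ := if t ≤ T then S1 t else Sf t

def suppressedI (p : SIRParams) (I1 Sf : ℝ → ℝ) (T τ c t : ℝ) : ℝ :=
  if t ≤ T then I1 t else if t ≤ T + τ then I1 T * Real.exp (-(p.γ * (t - T)))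
  else c - p.potential (Sf t)

lemma suppressedS_of_le (hτ : 0 ≤ τ) (hSf : IsOrbitSolution p (T + τ) (S1 T) c Sf) {t : ℝ}
    (ht : T ≤ t) : suppressedS S1 Sf T t = Sf t := by
  rcases ht.lt_or_eq with ht | rfl
  · exact if_neg ht.not_ge
  · exact (if_pos le_rfl).trans (hSf.eq_of_le _ (by linarith)).symm

lemma suppressedI_of_mem_Icc {t : ℝ} (ht : t ∈ Icc T (T + τ)) :
    suppressedI p I1 Sf T τ c t = I1 T * Real.exp (-(p.γ * (t - T))) := by
  rcases ht.1.lt_or_eq with h | rfl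
  · exact (if_neg h.not_ge).trans (if_pos ht.2)
  · simp [suppressedI]

lemma suppressedI_of_le (hτ : 0 ≤ τ) (hSf : IsOrbitSolution p (T + τ) (S1 T) c Sf)
    (hc : c = I1 T * Real.exp (-(p.γ * τ)) + p.potential (S1 T)) {t : ℝ} (ht : T + τ ≤ t) :
    suppressedI p I1 Sf T τ c t = c - p.potential (Sf t) := by
  rcases ht.lt_or_eq with h | rfl
  · exact (if_neg (by linarith)).trans (if_neg h.not_ge)
  · rw [suppressedI_of_mem_Icc ⟨by linarith, le_rfl⟩, hSf.eq_of_le _ le_rfl, hc]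
    ring_nf

lemma continuous_suppressedS (href : IsReference p S1 I1) (hτ : 0 ≤ τ)
    (hSf : IsOrbitSolution p (T + τ) (S1 T) c Sf) : Continuous (suppressedS S1 Sf T) :=
  Continuous.if_le href.1.continuous_S hSf.continuous continuous_id continuous_const
    fun t ht => by rw [ht, hSf.eq_of_le T (by linarith)]

lemma continuous_suppressedI (href : IsReference p S1 I1) (hτ : 0 ≤ τ)
    (hSf : IsOrbitSolution p (T + τ) (S1 T) c Sf)
    (hc : c = I1 T * Real.exp (-(p.γ * τ)) + p.potential (S1 T)) :
    Continuous (suppressedI p I1 Sf T τ c) := by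
  refine Continuous.if_le href.1.continuous_I (Continuous.if_le (by fun_prop)
    (continuous_const.sub
      (SIRParams.continuousOn_potential.comp_continuous hSf.continuous hSf.pos))
    continuous_id continuous_const fun t ht => ?_) continuous_id continuous_const fun t ht => ?_
  · rw [ht, hSf.eq_of_le _ le_rfl, hc, add_sub_cancel_left, add_sub_cancel_right]
  · rw [ht, if_pos (by linarith), sub_self, mul_zero, neg_zero, Real.exp_zero, mul_one]

lemma hasDerivWithinAt_suppressedS (href : IsReference p S1 I1) (hτ : 0 < τ)
    (hSf : IsOrbitSolution p (T + τ) (S1 T) c Sf)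
    (hc : c = I1 T * Real.exp (-(p.γ * τ)) + p.potential (S1 T)) (x : ℝ) :
    HasDerivWithinAt (suppressedS S1 Sf T) (-(suppression T τ x * p.β * suppressedS S1 Sf T x *
      suppressedI p I1 Sf T τ c x)) (Ioi x) x := by
  refine hasDerivWithinAt_Ioi_ite_le (hSf.eq_of_le T (by linarith)).symm (fun hx => ?_) fun hx => ?_
  · rw [suppression_eq_one fun h => hx.not_ge h.1]
    simp only [suppressedS, suppressedI, if_pos hx.le, one_mul]
    exact (href.hasDerivAt x).1.hasDerivWithinAt
  rw [suppressedS_of_le hτ.le hSf hx]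
  rcases lt_or_ge x (T + τ) with h | h
  · rw [suppression_eq_zero ⟨hx, h⟩, zero_mul, zero_mul, zero_mul, neg_zero]
    refine (hasDerivWithinAt_const x _ (S1 T)).congr_of_eventuallyEq ?_ (hSf.eq_of_le x h.le)
    filter_upwards [mem_nhdsWithin_of_mem_nhds (Iio_mem_nhds h)] with t ht
      using hSf.eq_of_le t ht.le
  · rw [suppression_eq_one fun h' => h.not_gt h'.2, suppressedI_of_le hτ.le hSf hc h, one_mul]
    exact (hSf.hasDerivWithinAt x h).mono Ioi_subset_Ici_self

lemma hasDerivWithinAt_suppressedI (href : IsReference p S1 I1) (hτ : 0 < τ)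
    (hSf : IsOrbitSolution p (T + τ) (S1 T) c Sf)
    (hc : c = I1 T * Real.exp (-(p.γ * τ)) + p.potential (S1 T)) (x : ℝ) :
    HasDerivWithinAt (suppressedI p I1 Sf T τ c) (suppression T τ x * p.β * suppressedS S1 Sf T x *
      suppressedI p I1 Sf T τ c x - p.γ * suppressedI p I1 Sf T τ c x) (Ioi x) x := by
  refine hasDerivWithinAt_Ioi_ite_le (by simp [hτ.le]) (fun hx => ?_) fun hx => ?_
  · rw [suppression_eq_one fun h => hx.not_ge h.1]
    simp only [suppressedS, suppressedI, if_pos hx.le]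
    exact (href.hasDerivAt x).2.hasDerivWithinAt.congr_deriv (by ring)
  refine hasDerivWithinAt_Ioi_ite_le (by rw [hSf.eq_of_le _ le_rfl, hc]; ring_nf)
    (fun h => ?_) fun h => ?_
  · rw [suppression_eq_zero ⟨hx, h⟩, suppressedI_of_mem_Icc ⟨hx, h.le⟩]
    exact ((((hasDerivAt_id x).sub_const T).const_mul p.γ).neg.exp.const_mul
      (I1 T)).hasDerivWithinAt.congr_deriv (by simp only [Pi.neg_apply, id]; ring)
  · have hSx := hSf.pos x
    rw [suppression_eq_one fun h' => h.not_gt h'.2, suppressedS_of_le hτ.le hSf hx,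
      suppressedI_of_le hτ.le hSf hc h, one_mul, ← p.sub_Scrit_div_mul hSx.ne']
    exact (((SIRParams.hasDerivAt_potential hSx.ne').comp_hasDerivWithinAt x
      ((hSf.hasDerivWithinAt x h).mono Ioi_subset_Ici_self)).const_sub c).congr_deriv (by ring)

lemma suppressed_bounds (href : IsReference p S1 I1) (hτ : 0 ≤ τ)
    (hSf : IsOrbitSolution p (T + τ) (S1 T) c Sf)
    (hc : c = I1 T * Real.exp (-(p.γ * τ)) + p.potential (S1 T)) (t : ℝ) :
    0 < suppressedS S1 Sf T t ∧ 0 ≤ suppressedI p I1 Sf T τ c t ∧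
      suppressedS S1 Sf T t + suppressedI p I1 Sf T τ c t ≤ 1 := by
  have hI1 := href.I_pos T
  rcases le_or_gt t T with h | h
  · simp only [suppressedS, suppressedI, if_pos h]
    exact ⟨href.S_pos t, (href.I_pos t).le, href.1.sum_le_one t (mem_univ t)⟩
  rw [suppressedS_of_le hτ hSf h.le]
  rcases le_or_gt t (T + τ) with h' | h'
  · rw [suppressedI_of_mem_Icc ⟨h.le, h'⟩, hSf.eq_of_le t h']
    have hexp : Real.exp (-(p.γ * (t - T))) ≤ 1 :=
      Real.exp_le_one_iff.2 (neg_nonpos.2 (mul_nonneg p.hγ.le (sub_nonneg.2 h.le)))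
    have hT := href.1.sum_le_one T (mem_univ T)
    exact ⟨href.S_pos T, by positivity, by nlinarith⟩
  · rw [suppressedI_of_le hτ hSf hc h'.le]
    have hlog : Real.log (Sf t) ≤ 0 :=
      Real.log_nonpos (hSf.pos t).le ((hSf.le t).trans (href.1.Sle_one T (mem_univ T)))
    have hexp : Real.exp (-(p.γ * τ)) ≤ 1 :=
      Real.exp_le_one_iff.2 (neg_nonpos.2 (mul_nonneg p.hγ.le hτ))
    have hc1 : c ≤ 1 := by
      rw [hc, ← href.I_add_potential T]
      nlinarith
    have hsum : Sf t + (c - p.potential (Sf t)) = c + p.Scrit * Real.log (Sf t) := by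
      rw [SIRParams.potential]; ring
    refine ⟨hSf.pos t, sub_nonneg.2 (hSf.potential_lt t).le, ?_⟩
    nlinarith [p.Scrit_pos_s9]

lemma isControlled_suppressed (href : IsReference p S1 I1) (hτ : 0 < τ)
    (hSf : IsOrbitSolution p (T + τ) (S1 T) c Sf)
    (hc : c = I1 T * Real.exp (-(p.γ * τ)) + p.potential (S1 T)) :
    IsControlled p S1 I1 (suppressionIntervention p T hτ) (suppressedS S1 Sf T)
      (suppressedI p I1 Sf T τ c) :=
  ⟨.of_hasDerivWithinAt intervalIntegrable_suppression (continuous_suppressedS href hτ.le hSf)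
    (continuous_suppressedI href hτ.le hSf hc) (fun t => (suppressed_bounds href hτ.le hSf hc t).1)
    (fun t => (suppressed_bounds href hτ.le hSf hc t).2.1)
    (fun t => (suppressed_bounds href hτ.le hSf hc t).2.2)
    (hasDerivWithinAt_suppressedS href hτ hSf hc) (hasDerivWithinAt_suppressedI href hτ hSf hc),
    fun _ ht => ⟨if_pos ht, if_pos ht⟩⟩

lemma suppressedI_le (hτ : 0 ≤ τ) (hSf : IsOrbitSolution p (T + τ) (S1 T) c Sf)
    (hc : c = I1 T * Real.exp (-(p.γ * τ)) + p.potential (S1 T)) (hI1 : 0 ≤ I1 T) {t : ℝ}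
    (ht : T ≤ t) :
    suppressedI p I1 Sf T τ c t ≤ max (I1 T) (c - p.potential p.Scrit) := by
  rcases le_or_gt t (T + τ) with h | h
  · rw [suppressedI_of_mem_Icc ⟨ht, h⟩]
    exact le_max_of_le_left (mul_le_of_le_one_right hI1
      (Real.exp_le_one_iff.2 (neg_nonpos.2 (mul_nonneg p.hγ.le (sub_nonneg.2 ht)))))
  · rw [suppressedI_of_le hτ hSf hc h.le]
    exact le_max_of_le_right (sub_le_sub_left (SIRParams.potential_Scrit_le (hSf.pos t)) c)

end Competitor

lemma IsReference.exists_Imax_lt_peak {p : SIRParams} {S1 I1 : ℝ → ℝ}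
    (href : IsReference p S1 I1) {τ : ℝ} (hτ : 0 < τ) :
    ∃ b : Intervention p, b.τ = τ ∧ ∃ S I, IsControlled p S1 I1 b S I ∧ Imax I < p.peak := by
  obtain ⟨tp, htp⟩ := href.exists_S_eq_Scrit
  set T := tp - 1
  set c := I1 T * Real.exp (-(p.γ * τ)) + p.potential (S1 T)
  have hexp : Real.exp (-(p.γ * τ)) < 1 :=
    Real.exp_lt_one_iff.2 (neg_lt_zero.2 (mul_pos p.hγ hτ))
  have hc1 : c < 1 := by
    have := href.I_add_potential T
    nlinarith [href.I_pos T]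
  obtain ⟨Sf, hSf⟩ := SIRParams.exists_orbit_solution (T + τ) (href.S_pos T)
    (lt_add_of_pos_left _ (mul_pos (href.I_pos T) (Real.exp_pos _)) : p.potential (S1 T) < c)
  refine ⟨suppressionIntervention p T hτ, rfl, _, _, isControlled_suppressed href hτ hSf rfl, ?_⟩
  have hmono := href.strictMonoOn_I htp
  have hT : I1 T < p.peak :=
    href.I_eq_peak htp ▸ hmono (by simp [T]) self_mem_Iic (by simp [T])
  refine (csSup_le (range_nonempty _) (forall_mem_range.2 fun t => ?_)).trans_lt
    (max_lt hT (show c - p.potential p.Scrit < p.peak by rw [SIRParams.peak]; linarith))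
  rcases le_total t T with h | h
  · rw [suppressedI, if_pos h]
    exact le_max_of_le_left (hmono.monotoneOn (h.trans (by simp [T])) (by simp [T]) h)
  · exact suppressedI_le hτ.le hSf rfl (href.I_pos T).le h

/-- Don't be late: for an optimal intervention, the global peak
cannot occur strictly before the intervention begins, and `S(t_i) > Scrit`. -/
theorem dont_be_late (p : SIRParams) (S1 I1 : ℝ → ℝ)
    (href : IsReference p S1 I1)
    (bs : Intervention p) (Sb Ib : ℝ → ℝ)
    (hopt : IsOptimal p S1 I1 bs Sb Ib) :
    (∀ t < bs.ti, Ib t < Imax Ib) ∧ p.Scrit < Sb bs.ti := by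
  obtain ⟨⟨htraj, hcoin⟩, hopt⟩ := hopt
  obtain ⟨b, hbτ, S, I, hctrl, hlt⟩ := href.exists_Imax_lt_peak bs.hτ
  have hImax : Imax Ib < p.peak := (hopt b hbτ S I hctrl).trans_lt hlt
  obtain ⟨tp, htp⟩ := href.exists_S_eq_Scrit
  have hti : bs.ti < tp := by
    by_contra! h
    have := htraj.le_Imax tp
    rw [(hcoin tp h).2, href.I_eq_peak htp] at this
    linarith
  refine ⟨fun t ht => ?_, ?_⟩
  · calc Ib t = I1 t := (hcoin t ht.le).2
      _ < I1 bs.ti := href.strictMonoOn_I htp (ht.le.trans hti.le) hti.le ht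
      _ = Ib bs.ti := (hcoin _ le_rfl).2.symm
      _ ≤ Imax Ib := htraj.le_Imax _
  · rw [(hcoin _ le_rfl).1, ← htp]
    exact href.strictAnti_S hti
end
end
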